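/- Postselected teleportation preserves entanglement: let α be a finite type and Ψ : α × Fin 2 → ℂ a joint state of an ancilla register A and a qubit q. Let Φ : α × Fin 2 × Fin 2 × Fin 2 → ℂ be the state obtained from Ψ ⊗ EPR (the EPR pair occupying fresh qubits r₁, r₂) by applying B† to the pair (q, r₁) and the identity elsewhere. Then the postselected component (a, c) ↦ Φ(a, 0, 0, c) equals (1/2)·Ψ; i.e., when the Bell measurement outcome on (q, r₁) is 00, the original joint state of A and q is reproduced exactly (entanglement included) on A and r₂, scaled by 1/2. -/

import Mathlib

/-!
The amplitudes of the EPR pair and the `(0, 0)` row of `B†` are both given by the column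
`B|00⟩ = (δ_{bc}/√2)_{b,c}`, which is real. Hence the postselected amplitude at `(a, c)` is
`∑_{b,b'} δ_{bb'}/√2 · Ψ(a, b) · δ_{b'c}/√2 = Ψ(a, c)/2`.
-/

open Matrix Kronecker

noncomputable def Hgate : Matrix (Fin 2) (Fin 2) ℂ :=
  ((1 / Real.sqrt 2 : ℝ) : ℂ) • !![1, 1; 1, -1]

/-- The CNOT gate: `CNOT(|a⟩⊗|b⟩) = |a⟩⊗|a⊕b⟩`. -/
def CNOT : Matrix (Fin 2 × Fin 2) (Fin 2 × Fin 2) ℂ :=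
  fun p q => if p = (q.1, q.1 + q.2) then 1 else 0

/-- The Bell gate `B = CNOT * (H ⊗ I₂)`. -/
noncomputable def Bgate : Matrix (Fin 2 × Fin 2) (Fin 2 × Fin 2) ℂ :=
  CNOT * (Hgate ⊗ₖ (1 : Matrix (Fin 2) (Fin 2) ℂ))

/-- `B†`, the conjugate transpose of the Bell gate. -/
noncomputable def Bdag : Matrix (Fin 2 × Fin 2) (Fin 2 × Fin 2) ℂ := Bgateᴴ

/-- The computational basis state `|a⟩` of one qubit. -/
def ket (a : Fin 2) : Fin 2 → ℂ := fun i => if i = a then 1 else 0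

/-- The EPR state `B(|0⟩⊗|0⟩) = (|00⟩+|11⟩)/√2`. -/
noncomputable def EPR : Fin 2 × Fin 2 → ℂ :=
  Bgate.mulVec fun p => ket 0 p.1 * ket 0 p.2

/-- The state obtained from `Ψ ⊗ EPR` (with the EPR pair on fresh qubits `r₁, r₂`)
by applying `B†` to the pair `(q, r₁)` and the identity elsewhere.  Coordinates
are `(a, q, r₁, r₂)`. -/
noncomputable def teleported {α : Type*} [Fintype α] (Ψ : α × Fin 2 → ℂ) :
    α × Fin 2 × Fin 2 × Fin 2 → ℂ :=
  fun x => ∑ y : Fin 2 × Fin 2,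
    Bdag (x.2.1, x.2.2.1) y * (Ψ (x.1, y.1) * EPR (y.2, x.2.2.2))

lemma ket_mul_ket_eq_single (a b : Fin 2) :
    (fun p : Fin 2 × Fin 2 => ket a p.1 * ket b p.2) = Pi.single (a, b) 1 := by
  ext ⟨i, j⟩
  simp only [ket, Pi.single_apply, Prod.mk.injEq, ite_zero_mul_ite_zero, mul_one]

lemma Hgate_apply_zero (i : Fin 2) : Hgate i 0 = ((1 / Real.sqrt 2 : ℝ) : ℂ) := by
  fin_cases i <;> simp [Hgate]

lemma Bgate_apply_zero_zero (y : Fin 2 × Fin 2) :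
    Bgate y (0, 0) = if y.1 = y.2 then ((1 / Real.sqrt 2 : ℝ) : ℂ) else 0 := by
  obtain ⟨i, j⟩ := y
  simp only [Bgate, mul_apply, Fintype.sum_prod_type, kroneckerMap_apply, one_apply,
    Hgate_apply_zero, CNOT, Prod.mk.injEq]
  fin_cases i <;> fin_cases j <;> simp

lemma EPR_apply (b c : Fin 2) :
    EPR (b, c) = if b = c then ((1 / Real.sqrt 2 : ℝ) : ℂ) else 0 := by
  rw [EPR, ket_mul_ket_eq_single, mulVec_single_one, col_apply, Bgate_apply_zero_zero]

lemma Bdag_zero_zero_apply (y : Fin 2 × Fin 2) :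
    Bdag (0, 0) y = if y.1 = y.2 then ((1 / Real.sqrt 2 : ℝ) : ℂ) else 0 := by
  rw [Bdag, conjTranspose_apply, Bgate_apply_zero_zero]
  split_ifs <;> simp

lemma sum_diag_mul_ite_eq {β R : Type*} [Fintype β] [DecidableEq β] [CommSemiring R]
    (s : R) (f : β → R) (c : β) :
    ∑ y : β × β, (if y.1 = y.2 then s else 0) * (f y.1 * if y.2 = c then s else 0) =
      s * s * f c := by
  simp [Fintype.sum_prod_type, mul_comm, mul_left_comm]

lemma ofReal_one_div_sqrt_two_mul_self :
    ((1 / Real.sqrt 2 : ℝ) : ℂ) * ((1 / Real.sqrt 2 : ℝ) : ℂ) = 1 / 2 := by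
  rw [← Complex.ofReal_mul, div_mul_div_comm, Real.mul_self_sqrt zero_le_two]
  push_cast; ring

/-- Postselected teleportation preserves entanglement: the component of the
teleported state in which the Bell measurement outcome on `(q, r₁)` is `00`,
regarded as a joint state of the ancilla register and `r₂`, equals `(1/2)·Ψ`. -/
theorem postselected_teleportation {α : Type*} [Fintype α] (Ψ : α × Fin 2 → ℂ) :
    (fun p : α × Fin 2 => teleported Ψ (p.1, 0, 0, p.2)) = (1 / 2 : ℂ) • Ψ := by
  ext ⟨a, c⟩
  simp only [teleported, Bdag_zero_zero_apply, EPR_apply]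
  rw [sum_diag_mul_ite_eq _ (fun b => Ψ (a, b)), ofReal_one_div_sqrt_two_mul_self,
    Pi.smul_apply, smul_eq_mul]
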